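/- arXiv:2402.02560 — 2 statements merged into one kernel-verified Lean document; each statement's English description precedes it below -/
import Mathlib

section
/- Let F ∈ L_t and G ∈ L_s be polynomial vector fields on ℝⁿ with homogeneous components of degrees t+1 and s+1, and set ℓ = (t+1)/(s+1). Then [F,G] = 0 identically if and only if M(x) · x = 0 for all x ∈ ℝⁿ, where M(x) = (dG/dx)(x)(dF/dx)(x) − ℓ · (dF/dx)(x)(dG/dx)(x). -/
/-!
Euler's identity `∑ⱼ xⱼ ∂ⱼ p = d p` for a homogeneous `p` of degree `d` says that the Jacobian
of a field in `L_t` sends `x` to `(t+1) F(x)`. Hence `(dG)(dF) x = (t+1) (dG) F(x)` and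
`(dF)(dG) x = (s+1) (dF) G(x)`, so `M(x) x = (t+1) [F,G](x)`, and a real polynomial vanishes
identically as soon as it vanishes at every point.
-/

open MvPolynomial

/-- The Lie bracket `[F,G](x) = (dG/dx)(x) F(x) − (dF/dx)(x) G(x)` of polynomial vector
fields on `ℝⁿ`. -/
noncomputable def bracket {n : ℕ} (F G : Fin n → MvPolynomial (Fin n) ℝ) :
    Fin n → MvPolynomial (Fin n) ℝ :=
  fun i => (∑ j, pderiv j (G i) * F j) - ∑ j, pderiv j (F i) * G j

/-- The Jacobian matrix of a polynomial vector field, evaluated at a point `x ∈ ℝⁿ`. -/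
noncomputable def jacEval {n : ℕ} (F : Fin n → MvPolynomial (Fin n) ℝ) (x : Fin n → ℝ) :
    Matrix (Fin n) (Fin n) ℝ :=
  fun i j => eval x (pderiv j (F i))

open Matrix

theorem jacEval_mulVec_self {n d : ℕ} {F : Fin n → MvPolynomial (Fin n) ℝ}
    (hF : ∀ i, (F i).IsHomogeneous d) (x : Fin n → ℝ) :
    jacEval F x *ᵥ x = (d : ℝ) • fun i => eval x (F i) := by
  ext i
  have euler := congrArg (eval x) (hF i).sum_X_mul_pderiv
  simp only [map_sum, map_mul, eval_X, nsmul_eq_mul, map_natCast] at euler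
  simp only [mulVec, dotProduct, jacEval, Pi.smul_apply, smul_eq_mul]
  rw [← euler]
  exact Finset.sum_congr rfl fun j _ => mul_comm _ _

theorem eval_bracket {n : ℕ} (F G : Fin n → MvPolynomial (Fin n) ℝ) (x : Fin n → ℝ) :
    (fun i => eval x (bracket F G i))
      = jacEval G x *ᵥ (fun i => eval x (F i)) - jacEval F x *ᵥ (fun i => eval x (G i)) := by
  ext i
  simp [bracket, jacEval, mulVec, dotProduct]

theorem mulVec_self_eq_smul_eval_bracket {n : ℕ} (t s : ℕ) {F G : Fin n → MvPolynomial (Fin n) ℝ}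
    (hF : ∀ i, (F i).IsHomogeneous (t + 1)) (hG : ∀ i, (G i).IsHomogeneous (s + 1))
    (x : Fin n → ℝ) :
    (jacEval G x * jacEval F x
        - (((t : ℝ) + 1) / ((s : ℝ) + 1)) • (jacEval F x * jacEval G x)) *ᵥ x
      = ((t : ℝ) + 1) • fun i => eval x (bracket F G i) := by
  have hs : (s : ℝ) + 1 ≠ 0 := by positivity
  rw [sub_mulVec, smul_mulVec, ← mulVec_mulVec, ← mulVec_mulVec, jacEval_mulVec_self hF,
    jacEval_mulVec_self hG, mulVec_smul, mulVec_smul, smul_smul, eval_bracket, smul_sub]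
  push_cast
  rw [div_mul_cancel₀ _ hs]

/-- For `F ∈ L_t`, `G ∈ L_s` and `ℓ = (t+1)/(s+1)`: `[F,G] = 0` identically if and only if
`M(x) · x = 0` for all `x ∈ ℝⁿ`, where
`M(x) = (dG/dx)(x)(dF/dx)(x) − ℓ (dF/dx)(x)(dG/dx)(x)`. -/
theorem bracket_zero_iff {n : ℕ} (t s : ℕ) (F G : Fin n → MvPolynomial (Fin n) ℝ)
    (hF : ∀ i, (F i).IsHomogeneous (t + 1)) (hG : ∀ i, (G i).IsHomogeneous (s + 1)) :
    bracket F G = 0 ↔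
      ∀ x : Fin n → ℝ,
        (jacEval G x * jacEval F x
            - (((t : ℝ) + 1) / ((s : ℝ) + 1)) • (jacEval F x * jacEval G x)).mulVec x = 0 := by
  have ht : (t : ℝ) + 1 ≠ 0 := by positivity
  simp only [mulVec_self_eq_smul_eval_bracket t s hF hG, smul_eq_zero, ht, false_or,
    _root_.funext_iff, Pi.zero_apply]
  constructor
  · intro h x i
    simp [h i]
  · intro h i
    exact MvPolynomial.funext fun x => by simp [h x i]
end

section
/- Let p ≥ 1 and F_p(x) = (1/(p+1)) · (x_1^{p+1}, …, x_n^{p+1}) on ℝⁿ. Then the kernel of ad(F_p) restricted to L_p is exactly the ℝ-linear span of the n vector fields g_i(x) = x_i^{p+1} e_i (i = 1,…,n), where e_i is the i-th standard basis vector; i.e. G ∈ L_p satisfies [F_p, G] = 0 if and only if G is a linear combination of g_1,…,g_n. -/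
open MvPolynomial

/-!
Write `D = ∑ⱼ xⱼ^{p+1} ∂ⱼ`; the bracket vanishes iff `D Gᵢ = (p+1) xᵢ^p Gᵢ` for every `i`.
If `Gᵢ` involves some `x_k` with `k ≠ i`, take a monomial `x^α` of `Gᵢ` of maximal `x_k`-degree.
The coefficient of `x^{α + p e_k}` is `α_k c_α ≠ 0` in `D Gᵢ`, but it is `0` in `xᵢ^p Gᵢ` and in
every other term of `D Gᵢ`, whose `x_k`-degree stays at most `α_k < α_k + p` because `p ≥ 1`.
So `Gᵢ` is a polynomial in `xᵢ` alone, and comparing the coefficients of `xᵢ^{m+p}` in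
`xᵢ^{p+1} ∂ᵢ Gᵢ = (p+1) xᵢ^p Gᵢ` gives `m c_m = (p+1) c_m`, so only `m = p + 1` survives.
-/

namespace MvPolynomial

variable {σ R : Type*}

section CommSemiring

variable [CommSemiring R]

theorem coeff_X_mul_pderiv (j : σ) (Q : MvPolynomial σ R) (α : σ →₀ ℕ) :
    coeff α (X j * pderiv j Q) = α j * coeff α Q := by
  classical
  induction Q using induction_on' with
  | monomial m r =>
    rw [X_mul_pderiv_monomial, coeff_smul, coeff_monomial]
    split_ifs with h <;> simp [h, nsmul_eq_mul]
  | add f g hf hg => rw [map_add, mul_add, coeff_add, hf, hg, coeff_add, mul_add]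

theorem coeff_add_single_pderiv_mul_X_pow (j : σ) (p : ℕ) (Q : MvPolynomial σ R)
    (α : σ →₀ ℕ) :
    coeff (α + Finsupp.single j p) (pderiv j Q * X j ^ (p + 1)) = α j * coeff α Q := by
  rw [pow_succ', ← mul_assoc, mul_comm _ (X j), X_pow_eq_monomial, coeff_mul_monomial, mul_one,
    coeff_X_mul_pderiv]

theorem degreeOf_pderiv_le (j k : σ) (Q : MvPolynomial σ R) :
    degreeOf k (pderiv j Q) ≤ degreeOf k Q := by
  classical
  refine degreeOf_le_iff.mpr fun m hm => ?_
  have hm' : m + Finsupp.single j 1 ∈ Q.support := by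
    rw [mem_support_iff, coeff_pderiv] at hm
    exact mem_support_iff.mpr (left_ne_zero_of_mul hm)
  calc m k ≤ (m + Finsupp.single j 1 : σ →₀ ℕ) k := by simp
    _ ≤ degreeOf k Q := le_degreeOf_of_mem_support k hm'

theorem pderiv_C_mul_X_pow_self (a : R) (i : σ) (p : ℕ) :
    pderiv i (C a * X i ^ (p + 1) : MvPolynomial σ R) = C (a * ((p : R) + 1)) * X i ^ p := by
  rw [pderiv_C_mul, pderiv_pow, pderiv_X_self, add_tsub_cancel_right, mul_one, map_mul, mul_assoc]
  simp only [map_add, map_natCast, map_one, Nat.cast_add, Nat.cast_one]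

end CommSemiring

section CharZeroDomain

variable [Fintype σ] [CommRing R] [IsDomain R] [CharZero R] {p : ℕ} {Q : MvPolynomial σ R}
  {i : σ}

theorem degreeOf_eq_zero_of_sum_pderiv_mul_X_pow_eq (hp : 1 ≤ p)
    (h : ∑ j, pderiv j Q * X j ^ (p + 1) = C ((p : R) + 1) * (Q * X i ^ p))
    {k : σ} (hk : k ≠ i) : degreeOf k Q = 0 := by
  by_contra hd
  obtain ⟨α, hα, hαk⟩ : ∃ α ∈ Q.support, degreeOf k Q = α k := by
    rw [degreeOf_eq_sup]
    exact Finset.exists_mem_eq_sup _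
      (support_nonempty.mpr (ne_zero_of_degreeOf_ne_zero hd)) (fun m => m k)
  have hvanish (f : MvPolynomial σ R) (hf : degreeOf k f ≤ degreeOf k Q) :
      coeff (α + Finsupp.single k p) f = 0 :=
    notMem_support_iff.mp <| notMem_support_of_degreeOf_lt k <| by
      simp only [Finsupp.coe_add, Pi.add_apply, Finsupp.single_eq_same]
      omega
  have hcoeff := congrArg (coeff (α + Finsupp.single k p)) h
  rw [coeff_sum, Finset.sum_eq_single k, coeff_add_single_pderiv_mul_X_pow, coeff_C_mul,
    hvanish _ (degreeOf_mul_X_pow_of_ne _ hk).le, mul_zero] at hcoeff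
  · exact mem_support_iff.mp hα <| (mul_eq_zero.mp hcoeff).resolve_left (by simpa [hαk] using hd)
  · intro j _ hj
    exact hvanish _ ((degreeOf_mul_X_pow_of_ne _ hj.symm).trans_le (degreeOf_pderiv_le j k Q))
  · simp

theorem eq_single_of_mem_support_of_sum_pderiv_mul_X_pow_eq (hp : 1 ≤ p)
    (h : ∑ j, pderiv j Q * X j ^ (p + 1) = C ((p : R) + 1) * (Q * X i ^ p)) :
    ∀ α ∈ Q.support, α = Finsupp.single i (p + 1) := by
  intro α hα
  have hdeg (k : σ) (hk : k ≠ i) : degreeOf k Q = 0 :=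
    degreeOf_eq_zero_of_sum_pderiv_mul_X_pow_eq hp h hk
  have h' : pderiv i Q * X i ^ (p + 1) = C ((p : R) + 1) * (Q * X i ^ p) := by
    rw [← h, Finset.sum_eq_single i (fun j _ hj => ?_) (by simp)]
    rw [pderiv_eq_zero_of_notMem_vars (by simpa [mem_vars_iff_degreeOf_ne_zero] using hdeg j hj),
      zero_mul]
  have hcoeff := congrArg (coeff (α + Finsupp.single i p)) h'
  rw [coeff_add_single_pderiv_mul_X_pow, coeff_C_mul, X_pow_eq_monomial, coeff_mul_monomial,
    mul_one] at hcoeff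
  have hαi : α i = p + 1 := by exact_mod_cast mul_right_cancel₀ (mem_support_iff.mp hα) hcoeff
  ext k
  rcases eq_or_ne k i with rfl | hk
  · simp [hαi]
  · rw [Finsupp.single_eq_of_ne hk]
    exact Nat.le_zero.mp (hdeg k hk ▸ le_degreeOf_of_mem_support k hα)

theorem sum_pderiv_mul_X_pow_eq_iff (hp : 1 ≤ p) :
    ∑ j, pderiv j Q * X j ^ (p + 1) = C ((p : R) + 1) * (Q * X i ^ p) ↔
      ∃ c, Q = C c * X i ^ (p + 1) := by
  constructor
  · intro h
    refine ⟨coeff (Finsupp.single i (p + 1)) Q, ?_⟩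
    rw [C_mul_X_pow_eq_monomial]
    exact eq_monomial_of_support_subset_singleton
      (eq_single_of_mem_support_of_sum_pderiv_mul_X_pow_eq hp h)
  · rintro ⟨c, rfl⟩
    rw [Finset.sum_eq_single i (fun j _ hj => by simp [hj.symm]) (by simp),
      pderiv_C_mul_X_pow_self, map_mul]
    ring

end CharZeroDomain

end MvPolynomial

theorem bracket_C_mul_X_pow_apply {n : ℕ} (a : ℝ) (p : ℕ) (G : Fin n → MvPolynomial (Fin n) ℝ)
    (i : Fin n) :
    bracket (fun i => C a * X i ^ (p + 1)) G i =
      C a * (∑ j, pderiv j (G i) * X j ^ (p + 1) - C ((p : ℝ) + 1) * (G i * X i ^ p)) := by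
  rw [bracket, Finset.sum_eq_single (s := Finset.univ) (f := fun j => pderiv j _ * G j) i
    (fun j _ hj => by simp [hj.symm]) (by simp), mul_sub, Finset.mul_sum]
  congr 1
  · exact Finset.sum_congr rfl fun j _ => by ring
  · rw [pderiv_C_mul_X_pow_self, map_mul]
    ring

theorem ad_Fp_kernel_general {n : ℕ} (p : ℕ) (hp : 1 ≤ p)
    (G : Fin n → MvPolynomial (Fin n) ℝ) :
    bracket (fun i => C (((p : ℝ) + 1)⁻¹) * X i ^ (p + 1)) G = 0 ↔
      ∃ c : Fin n → ℝ, G = fun i => C (c i) * X i ^ (p + 1) := by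
  have hC : C ((p : ℝ) + 1)⁻¹ ≠ (0 : MvPolynomial (Fin n) ℝ) := C_ne_zero.mpr (by positivity)
  simp only [_root_.funext_iff, Pi.zero_apply, bracket_C_mul_X_pow_apply, mul_eq_zero, hC, false_or,
    sub_eq_zero, sum_pderiv_mul_X_pow_eq_iff hp]
  exact Classical.skolem

/-- For `p ≥ 1` and `F_p(x) = (1/(p+1)) (x_1^{p+1}, …, x_n^{p+1})`, the kernel of
`ad(F_p)` on `L_p` is exactly the ℝ-span of the vector fields `g_i(x) = x_i^{p+1} e_i`:
a `G ∈ L_p` satisfies `[F_p, G] = 0` iff `G = Σᵢ cᵢ gᵢ`, i.e. the `i`-th component of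
`G` is `cᵢ xᵢ^{p+1}`. -/
theorem ad_Fp_kernel {n : ℕ} (p : ℕ) (hp : 1 ≤ p)
    (G : Fin n → MvPolynomial (Fin n) ℝ)
    (hG : ∀ i, (G i).IsHomogeneous (p + 1)) :
    bracket (fun i => C (((p : ℝ) + 1)⁻¹) * X i ^ (p + 1)) G = 0 ↔
      ∃ c : Fin n → ℝ, G = fun i => C (c i) * X i ^ (p + 1) :=
  ad_Fp_kernel_general p hp G
end
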